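/- Let f and f̃ be sp-triangular homomorphisms of Λ with coefficient families m and m̃ respectively. If m_{(1^i),(1^j)} = m̃_{(1^i),(1^j)} for all i > j ≥ 0, then f = f̃. -/

import Mathlib

open scoped BigOperators

noncomputable section

/-- The ring `Λ = ℝ[h₁, h₂, …]`: the variable `n : ℕ` represents `h_{n+1}`. -/
abbrev Lam : Type := MvPolynomial ℕ ℝ

/-- `H m` is the generator `h_m` of `Λ` for `m ≥ 1`, with the conventions `h_0 = 1`
and `h_m = 0` for `m < 0`. -/
def H (m : ℤ) : Lam :=
  if 1 ≤ m then MvPolynomial.X (m.toNat - 1) else if m = 0 then 1 else 0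

/-- A partition: an antitone, eventually-zero sequence of natural numbers;
`parts 0` is the first part `λ₁`. -/
structure Ptn where
  parts : ℕ → ℕ
  antitone' : ∀ ⦃i j : ℕ⦄, i ≤ j → parts j ≤ parts i
  eventually_zero : ∃ N, ∀ i, N ≤ i → parts i = 0

namespace Ptn

/-- The number of (nonzero) parts of a partition. -/
def len (μ : Ptn) : ℕ := sInf {N | ∀ i, N ≤ i → μ.parts i = 0}

/-- The size `|μ| = μ₁ + μ₂ + ⋯` of a partition. -/
def size (μ : Ptn) : ℕ := ∑ᶠ i, μ.parts i

/-- Extended dominance order: `μ.dle lam` iff `μ₁ + ⋯ + μ_k ≤ lam₁ + ⋯ + lam_k` for all `k`. -/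
def dle (μ lam : Ptn) : Prop :=
  ∀ k : ℕ, ∑ i ∈ Finset.range k, μ.parts i ≤ ∑ i ∈ Finset.range k, lam.parts i

end Ptn

/-- The Schur function `s_λ = det(h_{λ_i - i + j})_{1 ≤ i,j ≤ len λ}` in `Λ`. -/
def sF (lam : Ptn) : Lam :=
  (Matrix.of fun i j : Fin lam.len => H ((lam.parts i.1 : ℤ) - i.1 + j.1)).det

/-- The symplectic universal character
`sp_λ = ½ · det(h_{λ_i - i + j} + h_{λ_i - i - j + 2})_{1 ≤ i,j ≤ len λ}`, with `sp_∅ = 1`. -/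
def spF (lam : Ptn) : Lam :=
  if lam.len = 0 then 1 else
    (2⁻¹ : ℝ) • (Matrix.of fun i j : Fin lam.len =>
      H ((lam.parts i.1 : ℤ) - i.1 + j.1) + H ((lam.parts i.1 : ℤ) - i.1 - j.1)).det

/-- `f` is an sp-triangular homomorphism with coefficient family `m`:
`m lam lam = 1`, `m lam mu = 0` unless `mu ≤ lam` in extended dominance order, and
`f(s_λ) = ∑_{μ} m_{λμ} sp_μ` for every partition `λ`. -/
def IsSpTriangular (f : Lam →ₐ[ℝ] Lam) (m : Ptn → Ptn → ℝ) : Prop :=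
  (∀ lam, m lam lam = 1) ∧
  (∀ lam mu, m lam mu ≠ 0 → mu.dle lam) ∧
  (∀ lam, f (sF lam) = ∑ᶠ mu : Ptn, m lam mu • spF mu)

/-- The column partition `(1^i)`. -/
def colP (i : ℕ) : Ptn where
  parts := fun k => if k < i then 1 else 0
  antitone' := by intro k l hkl; (try dsimp only); split_ifs <;> omega
  eventually_zero := ⟨i, fun k hk => by (try dsimp only); split_ifs <;> omega⟩

/-- The one-row partition `(k)`. -/
def rowP (k : ℕ) : Ptn where
  parts := fun i => if i = 0 then k else 0
  antitone' := by intro i j hij; (try dsimp only); split_ifs <;> omega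
  eventually_zero := ⟨1, fun i hi => by (try dsimp only); split_ifs <;> omega⟩

/-- The rectangular partition `(k^d)`: `d` parts equal to `k`. -/
def rectP (k d : ℕ) : Ptn where
  parts := fun i => if i < d then k else 0
  antitone' := by intro i j hij; (try dsimp only); split_ifs <;> omega
  eventually_zero := ⟨d, fun i hi => by (try dsimp only); split_ifs <;> omega⟩

/-- The empty partition `∅`. -/
def emptyP : Ptn where
  parts := fun _ => 0
  antitone' := by intro i j _; exact le_rfl
  eventually_zero := ⟨0, fun _ _ => rfl⟩

/-- The hook partition `(a, 1^b)`: one part `a ≥ 1` followed by `b` parts equal to `1`. -/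
def hookP (a b : ℕ) (ha : 1 ≤ a) : Ptn where
  parts := fun i => if i = 0 then a else if i ≤ b then 1 else 0
  antitone' := by intro i j hij; (try dsimp only); split_ifs <;> omega
  eventually_zero := ⟨b + 1, fun i hi => by (try dsimp only); split_ifs <;> omega⟩

/-- The complement of `μ` in the `ℓ × m` rectangle, rotated by 180°:
its `i`-th part (0-indexed, `i < ℓ`) is `m - μ_{ℓ-i}`. -/
def complP (ℓ m : ℕ) (μ : Ptn) : Ptn where
  parts := fun i => if i < ℓ then m - μ.parts (ℓ - 1 - i) else 0
  antitone' := by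
    intro i j hij; (try dsimp only); split_ifs with hj hi
    · exact Nat.sub_le_sub_left (μ.antitone' (by omega)) m
    · omega
    · exact Nat.zero_le _
    · exact le_rfl
  eventually_zero := ⟨ℓ, fun i hi => by (try dsimp only); split_ifs <;> omega⟩

open Classical in
/-- The complete homogeneous symmetric power series of degree `m` in the variables from `S`:
the sum of all monomials of degree `m` supported on `S`; it is `1` for `m = 0` and `0` for
`m < 0`. -/
def hOn {σ : Type} (S : Set σ) (m : ℤ) : MvPowerSeries σ ℝ :=
  fun d => if 0 ≤ m ∧ ((d.sum fun _ e => e : ℕ) : ℤ) = m ∧ (↑d.support : Set σ) ⊆ S then 1 else 0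

open Classical in
/-- `p(x_v)`: the one-variable power series with coefficient sequence `a`, evaluated at the
variable `v`. -/
def pAt {σ : Type} (a : ℕ → ℝ) (v : σ) : MvPowerSeries σ ℝ :=
  fun d => if (↑d.support : Set σ) ⊆ ({v} : Set σ) then a (d v) else 0

/-- The degree-`N` homogeneous component of a multivariate power series. -/
def homComp {σ : Type} (N : ℕ) (F : MvPowerSeries σ ℝ) : MvPowerSeries σ ℝ :=
  fun d => if (d.sum fun _ e => e) = N then MvPowerSeries.coeff d F else 0

/-- `∏_{1 ≤ i < j ≤ n} (1 - x_i x_j)` in `ℝ[[x_1, …, x_n]]`. -/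
def kappaDen (n : ℕ) : MvPowerSeries (Fin n) ℝ :=
  ∏ q ∈ Finset.univ.filter (fun q : Fin n × Fin n => q.1 < q.2),
    (1 - MvPowerSeries.X q.1 * MvPowerSeries.X q.2)

/-- `κ_p^{(n)} = ∏_{i=1}^n p(x_i) / ∏_{1 ≤ i < j ≤ n} (1 - x_i x_j)` in `ℝ[[x_1, …, x_n]]`,
where `a` is the coefficient sequence of `p`. -/
def kappaN (a : ℕ → ℝ) (n : ℕ) : MvPowerSeries (Fin n) ℝ :=
  (∏ i : Fin n, pAt a i) * MvPowerSeries.invOfUnit (kappaDen n) 1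

/-- The Schur polynomial `s_μ(x_1, …, x_n) = det(h_{μ_i - i + j}(x_1, …, x_n))_{1 ≤ i,j ≤ n}`
as a power series in `ℝ[[x_1, …, x_n]]`. -/
def schurPow (n : ℕ) (p : ℕ → ℕ) : MvPowerSeries (Fin n) ℝ :=
  (Matrix.of fun i j : Fin n => hOn (Set.univ : Set (Fin n)) ((p i.1 : ℤ) - i.1 + j.1)).det

/-- `c` is the family of coefficients expressing the degree-`n` homogeneous component of `F`
in the basis of Schur polynomials `{s_μ(x_1, …, x_n) : |μ| = n}`. -/
def SchurExpansion (n : ℕ) (F : MvPowerSeries (Fin n) ℝ) (c : Ptn → ℝ) : Prop :=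
  homComp n F = ∑ᶠ (μ : Ptn) (_ : μ.size = n), c μ • schurPow n μ.parts

/-- `x = ⟨κ_p, s_ν⟩`: the coefficient of `s_ν(x_1, …, x_n)` (`n = |ν|`) in the Schur-basis
expansion of the degree-`n` homogeneous component of `κ_p^{(n)}`. -/
def KappaCoeff (a : ℕ → ℝ) (ν : Ptn) (x : ℝ) : Prop :=
  ∃ c : Ptn → ℝ, SchurExpansion ν.size (kappaN a ν.size) c ∧ c ν = x

/-- The power series `p` with coefficient sequence `a` is κ-positive:
`⟨κ_p, s_ν⟩ ≥ 0` for every (nonempty) partition `ν`. -/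
def KappaPositive (a : ℕ → ℝ) : Prop :=
  ∀ ν : Ptn, ν.len ≠ 0 → ∀ x : ℝ, KappaCoeff a ν x → 0 ≤ x

/-- `g_m(y) = ∑_{k=0}^m a_k h_{m-k}(y)` in the variables from `S` (`0` for `m < 0`). -/
def gY {σ : Type} (a : ℕ → ℝ) (S : Set σ) (m : ℤ) : MvPowerSeries σ ℝ :=
  if m < 0 then 0 else ∑ k ∈ Finset.range (m.toNat + 1), a k • hOn S (m - k)

end

/-!
The elementary symmetric functions `e_n = s_{(1^n)}` generate `Λ`: the Jacobi–Trudi determinant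
of `e_{n+1}`, expanded along its first column, gives the Newton-type identity
`e_{n+1} = ∑_{k=0}^{n} (-1)^k h_{k+1} e_{n-k}`, from which every `h_n` is a polynomial in the `e_k`.
Since `(1^j) ≤ (1^n)` are the only partitions dominated by `(1^n)`, triangularity gives
`f(e_n) = sp_{(1^n)} + ∑_{j<n} m_{(1^n),(1^j)} sp_{(1^j)}`, so the hypothesis makes `f` and `f̃`
agree on every `e_n`, hence on all of `Λ`.
-/

lemma H_zero : H 0 = 1 := by simp [H]

lemma H_of_neg {m : ℤ} (hm : m < 0) : H m = 0 := by
  rw [H, if_neg (by omega), if_neg (by omega)]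

lemma X_eq_H (n : ℕ) : (MvPolynomial.X n : Lam) = H ((n + 1 : ℕ) : ℤ) := by
  simp [H]

namespace Ptn

lemma ext {μ ν : Ptn} (h : μ.parts = ν.parts) : μ = ν := by
  cases μ; cases ν; simp_all

lemma parts_eq_zero_of_len_le (μ : Ptn) {i : ℕ} (h : μ.len ≤ i) : μ.parts i = 0 := by
  obtain ⟨N, hN⟩ := μ.eventually_zero
  exact (Nat.sInf_mem (s := {N | ∀ i, N ≤ i → μ.parts i = 0}) ⟨N, hN⟩) i h

lemma parts_ne_zero_of_lt_len (μ : Ptn) {i : ℕ} (h : i < μ.len) : μ.parts i ≠ 0 := by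
  intro h0
  have : μ.len ≤ i := Nat.sInf_le fun j hj => Nat.le_zero.1 (h0 ▸ μ.antitone' hj)
  omega

end Ptn

lemma colP_parts (n k : ℕ) : (colP n).parts k = if k < n then 1 else 0 := rfl

lemma colP_len (n : ℕ) : (colP n).len = n := by
  refine le_antisymm (Nat.sInf_le fun i hi => by rw [colP_parts, if_neg (by omega)]) ?_
  refine le_csInf ⟨n, fun i hi => by rw [colP_parts, if_neg (by omega)]⟩ fun N hN => ?_
  by_contra hlt
  have := hN (n - 1) (by omega)
  rw [colP_parts, if_pos (by omega)] at this
  omega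

lemma colP_injective : Function.Injective colP := fun i j hij => by
  rw [← colP_len i, ← colP_len j, hij]

lemma sum_range_colP_parts (n k : ℕ) : ∑ i ∈ Finset.range k, (colP n).parts i = min k n := by
  have hfilter : (Finset.range k).filter (· < n) = Finset.range (min k n) := by
    ext i; simp only [Finset.mem_filter, Finset.mem_range]; omega
  simp only [colP_parts, Finset.sum_boole, Nat.cast_id, hfilter, Finset.card_range]

lemma eq_colP_len_of_parts_le_one {μ : Ptn} (h : μ.parts 0 ≤ 1) : μ = colP μ.len := by
  refine Ptn.ext (funext fun i => ?_)
  rw [colP_parts]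
  split_ifs with hi
  · have := μ.parts_ne_zero_of_lt_len hi
    have := μ.antitone' (Nat.zero_le i)
    omega
  · exact μ.parts_eq_zero_of_len_le (not_lt.1 hi)

lemma exists_eq_colP_of_dle_colP {μ : Ptn} {n : ℕ} (h : μ.dle (colP n)) :
    ∃ j ≤ n, μ = colP j := by
  have hμ : μ = colP μ.len := by
    have h1 := h 1
    rw [sum_range_colP_parts, Finset.sum_range_one] at h1
    exact eq_colP_len_of_parts_le_one (by omega)
  refine ⟨μ.len, ?_, hμ⟩
  have := h μ.len
  rw [hμ, colP_len, sum_range_colP_parts, sum_range_colP_parts] at this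
  omega

/-- The Jacobi–Trudi matrix of `e_n` with its first row shifted to `h_a, h_{a+1}, …`. -/
noncomputable def shiftedEMatrix (n : ℕ) (a : ℤ) : Matrix (Fin n) (Fin n) Lam :=
  Matrix.of fun i j => if i.1 = 0 then H (a + j.1) else H (1 - i.1 + j.1)

lemma shiftedEMatrix_apply (n : ℕ) (a : ℤ) (i j : Fin n) :
    shiftedEMatrix n a i j = if i.1 = 0 then H (a + j.1) else H (1 - i.1 + j.1) := rfl

lemma sF_colP_eq_det (n : ℕ) : sF (colP n) = (shiftedEMatrix n 1).det := by
  rw [sF, colP_len n]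
  congr 1
  ext i j
  rw [Matrix.of_apply, colP_parts, if_pos i.2, shiftedEMatrix_apply]
  split_ifs with h0 <;> (push_cast [h0]; ring_nf)

lemma sF_colP_zero : sF (colP 0) = 1 := by
  rw [sF_colP_eq_det, Matrix.det_isEmpty]

lemma shiftedEMatrix_submatrix_zero (n : ℕ) (a : ℤ) :
    (shiftedEMatrix (n + 1) a).submatrix (0 : Fin (n + 1)).succAbove Fin.succ =
      shiftedEMatrix n 1 := by
  ext i j
  rw [Matrix.submatrix_apply, Fin.zero_succAbove, shiftedEMatrix_apply, shiftedEMatrix_apply,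
    Fin.val_succ, Fin.val_succ, if_neg (by omega)]
  split_ifs with h0 <;> (push_cast [h0]; ring_nf)

lemma shiftedEMatrix_submatrix_one (n : ℕ) (a : ℤ) :
    (shiftedEMatrix (n + 2) a).submatrix (1 : Fin (n + 2)).succAbove Fin.succ =
      shiftedEMatrix (n + 1) (a + 1) := by
  ext i j
  rw [Matrix.submatrix_apply, shiftedEMatrix_apply, shiftedEMatrix_apply, Fin.val_succ]
  rcases Nat.eq_zero_or_pos i.1 with h0 | h0
  · have hrow : ((1 : Fin (n + 2)).succAbove i).1 = 0 := by
      rw [Fin.succAbove_of_castSucc_lt _ _ (by simp [Fin.lt_def, h0])]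
      simpa using h0
    rw [if_pos hrow, if_pos h0]
    push_cast; ring_nf
  · have hrow : ((1 : Fin (n + 2)).succAbove i).1 = i.1 + 1 := by
      rw [Fin.succAbove_of_le_castSucc _ _ (by simp [Fin.le_iff_val_le_val]; omega)]
      exact Fin.val_succ i
    rw [hrow, if_neg (by omega), if_neg (by omega)]
    push_cast; ring_nf

/-- Laplace expansion along the first column, whose only nonzero entries are `h_a` and `h_0`. -/
lemma det_shiftedEMatrix_succ_succ (n : ℕ) (a : ℤ) :
    (shiftedEMatrix (n + 2) a).det =
      H a * sF (colP (n + 1)) - (shiftedEMatrix (n + 1) (a + 1)).det := by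
  have hlower : ∀ i : Fin n, shiftedEMatrix (n + 2) a i.succ.succ 0 = 0 := fun i => by
    rw [shiftedEMatrix_apply, if_neg (by simp)]
    exact H_of_neg (by simp only [Fin.val_succ, Fin.val_zero]; push_cast; omega)
  rw [Matrix.det_succ_column_zero, Fin.sum_univ_succ, Fin.sum_univ_succ,
    Finset.sum_eq_zero fun i _ => by rw [hlower i, mul_zero, zero_mul], add_zero,
    Fin.succ_zero_eq_one, shiftedEMatrix_submatrix_zero, shiftedEMatrix_submatrix_one,
    sF_colP_eq_det]
  have htop : shiftedEMatrix (n + 2) a 0 0 = H a := by simp [shiftedEMatrix_apply]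
  have hsub : shiftedEMatrix (n + 2) a 1 0 = 1 := by simp [shiftedEMatrix_apply, H_zero]
  rw [htop, hsub, Fin.val_zero, Fin.val_one, pow_zero, pow_one]
  ring

lemma det_shiftedEMatrix_eq_sum (n : ℕ) (a : ℤ) :
    (shiftedEMatrix (n + 1) a).det =
      ∑ k ∈ Finset.range (n + 1), (-1) ^ k * H (a + k) * sF (colP (n - k)) := by
  induction n generalizing a with
  | zero => simp [shiftedEMatrix_apply, sF_colP_zero]
  | succ n ih =>
    rw [det_shiftedEMatrix_succ_succ, ih, Finset.sum_range_succ' _ (n + 1),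
      sub_eq_add_neg, ← Finset.sum_neg_distrib, add_comm]
    simp only [pow_succ, Nat.add_sub_add_right, Nat.sub_zero, pow_zero, Nat.cast_zero, add_zero,
      Nat.cast_succ]
    congr 1
    · exact Finset.sum_congr rfl fun k _ => by ring_nf
    · ring

/-- Newton's identity `∑_{k=0}^{n+1} (-1)^k h_k e_{n+1-k} = 0`, solved for `e_{n+1}`. -/
lemma sF_colP_succ (n : ℕ) :
    sF (colP (n + 1)) =
      ∑ k ∈ Finset.range (n + 1), (-1) ^ k * H (k + 1) * sF (colP (n - k)) := by
  rw [sF_colP_eq_det, det_shiftedEMatrix_eq_sum]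
  simp only [add_comm (1 : ℤ)]

lemma H_mem_of_forall_sF_colP_mem (A : Subalgebra ℝ Lam) (hA : ∀ n, sF (colP n) ∈ A) (n : ℕ) :
    H n ∈ A := by
  induction n using Nat.strong_induction_on with
  | _ n ih =>
    rcases n with _ | n
    · simp [H_zero]
    have hsigned : (-1) ^ n * H ((n + 1 : ℕ) : ℤ) =
        sF (colP (n + 1)) -
          ∑ k ∈ Finset.range n, (-1) ^ k * H ((k + 1 : ℕ) : ℤ) * sF (colP (n - k)) := by
      rw [sF_colP_succ, Finset.sum_range_succ, Nat.sub_self, sF_colP_zero]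
      push_cast; ring
    have hsign : ((-1 : Lam) ^ n) * (-1) ^ n = 1 := by
      rw [← mul_pow, neg_one_mul, neg_neg, one_pow]
    rw [← one_mul (H _), ← hsign, mul_assoc, hsigned]
    refine A.mul_mem (A.pow_mem (A.neg_mem A.one_mem) n) (A.sub_mem (hA _) (A.sum_mem ?_))
    intro k hk
    exact A.mul_mem (A.mul_mem (A.pow_mem (A.neg_mem A.one_mem) k)
      (ih _ (by rw [Finset.mem_range] at hk; omega))) (hA _)

lemma IsSpTriangular.map_sF_colP {f : Lam →ₐ[ℝ] Lam} {m : Ptn → Ptn → ℝ}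
    (hf : IsSpTriangular f m) (n : ℕ) :
    f (sF (colP n)) = ∑ j ∈ Finset.range (n + 1), m (colP n) (colP j) • spF (colP j) := by
  classical
  rw [hf.2.2, finsum_eq_finsetSum_of_support_subset _ (s := (Finset.range (n + 1)).image colP),
    Finset.sum_image fun i _ j _ hij => colP_injective hij]
  intro μ hμ
  obtain ⟨j, hj, rfl⟩ := exists_eq_colP_of_dle_colP (hf.2.1 _ _ (left_ne_zero_of_smul hμ))
  exact Finset.mem_coe.2 (Finset.mem_image_of_mem _ (Finset.mem_range.2 (by omega)))

/-- Two sp-triangular homomorphisms whose coefficient families agree on all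
pairs of column partitions `((1^i), (1^j))`, `i > j ≥ 0`, are equal. -/
theorem statement6 (f ftil : Lam →ₐ[ℝ] Lam) (m mtil : Ptn → Ptn → ℝ)
    (hf : IsSpTriangular f m) (hftil : IsSpTriangular ftil mtil)
    (h : ∀ i j : ℕ, j < i → m (colP i) (colP j) = mtil (colP i) (colP j)) :
    f = ftil := by
  have hcol : ∀ n, sF (colP n) ∈ AlgHom.equalizer f ftil := fun n => by
    rw [AlgHom.mem_equalizer, hf.map_sF_colP, hftil.map_sF_colP]
    refine Finset.sum_congr rfl fun j hj => ?_
    rcases (Nat.lt_succ_iff.1 (Finset.mem_range.1 hj)).eq_or_lt with rfl | hlt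
    · rw [hf.1, hftil.1]
    · rw [h n j hlt]
  refine MvPolynomial.algHom_ext fun n => ?_
  rw [X_eq_H]
  exact H_mem_of_forall_sF_colP_mem _ hcol (n + 1)
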